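/- arXiv:1409.5614 — 3 statements merged into one kernel-verified Lean document; each statement's English description precedes it below -/
import Mathlib

section
/- If S is a cyclotomic numerical semigroup, then S is symmetric. -/
open Polynomial
open scoped Classical

/-- A numerical semigroup: a subset of `ℕ` containing `0`, closed under addition,
with finite complement in `ℕ`. -/
structure NumericalSemigroup where
  carrier : Set ℕ
  zero_mem : 0 ∈ carrier
  add_mem : ∀ ⦃a b : ℕ⦄, a ∈ carrier → b ∈ carrier → a + b ∈ carrier
  finite_compl : Set.Finite carrierᶜ

namespace NumericalSemigroup

/-- The Hilbert series `H_S(x) = Σ_{s ∈ S} x^s`. -/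
noncomputable def H (S : NumericalSemigroup) : PowerSeries ℤ :=
  PowerSeries.mk fun n => if n ∈ S.carrier then 1 else 0

/-- The Hilbert series evaluated at `x^w`: `H_S(x^w) = Σ_{s ∈ S} x^{w·s}`. -/
noncomputable def Hexp (S : NumericalSemigroup) (w : ℕ) : PowerSeries ℤ :=
  PowerSeries.mk fun n => if ∃ s ∈ S.carrier, n = w * s then 1 else 0

/-- The semigroup polynomial `P_S(x) = (1-x)·H_S(x) = 1 + (x-1)·Σ_{s ∉ S} x^s`. -/
noncomputable def P (S : NumericalSemigroup) : Polynomial ℤ :=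
  1 + (X - 1) * ∑ s ∈ S.finite_compl.toFinset, X ^ s

/-- The Frobenius number: the largest integer not in `S` (equal to `-1` when `S = ℕ`). -/
noncomputable def Frob (S : NumericalSemigroup) : ℤ :=
  (insert (-1 : ℤ) (S.finite_compl.toFinset.image fun n : ℕ => (n : ℤ))).max'
    (Finset.insert_nonempty _ _)

/-- The genus: the number of gaps of `S`. -/
noncomputable def genus (S : NumericalSemigroup) : ℕ := S.finite_compl.toFinset.card

/-- `S` viewed as a set of integers. -/
def intSet (S : NumericalSemigroup) : Set ℤ := (fun n : ℕ => (n : ℤ)) '' S.carrier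

/-- `S` is cyclotomic if every complex root of `P_S` lies in the closed unit disc. -/
def IsCyclotomicNS (S : NumericalSemigroup) : Prop :=
  ∀ z : ℂ, Polynomial.aeval z S.P = 0 → ‖z‖ ≤ 1

/-- `S` is symmetric if for every integer `z`, `z ∈ S ↔ F(S) - z ∉ S`. -/
def IsSymmetric (S : NumericalSemigroup) : Prop :=
  ∀ z : ℤ, z ∈ S.intSet ↔ S.Frob - z ∉ S.intSet

/-- The Apéry set of `S` with respect to `m`: elements `s ∈ S` with `s - m ∉ S`
(in particular all `s ∈ S` with `s < m`). -/
def Ap (S : NumericalSemigroup) (m : ℕ) : Set ℕ :=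
  {s ∈ S.carrier | ∀ t ∈ S.carrier, t + m ≠ s}

end NumericalSemigroup

/-!
The polynomial `P_S = 1 + (X - 1) ∑_{g ∉ S} X ^ g` has coefficient `[i ∈ S] - [i - 1 ∈ S]` at
`X ^ i`, so it is monic of degree `F + 1` with constant term `1`. The product of its complex roots
then has absolute value `1`; as they all lie in the closed unit disc, they lie on the unit circle,
where `z⁻¹ = conj z`. Since `P_S` has real coefficients its roots are closed under inversion, so
`P_S` is self-reciprocal. Matching the coefficients of `X ^ (z + 1)` and `X ^ (F - z)` shows that
`[z ∈ S] + [F - z ∈ S]` is independent of `z`, and at `z = 0` it is `1 + 0`.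
-/
theorem Multiset.norm_eq_one_of_norm_prod_eq_one {K : Type*} [NormedField K] {m : Multiset K}
    (hle : ∀ r ∈ m, ‖r‖ ≤ 1) (hprod : ‖m.prod‖ = 1) : ∀ r ∈ m, ‖r‖ = 1 := by
  intro r hr
  by_contra hne
  have hrest : ‖(m.erase r).prod‖₊ ≤ 1 := by
    rw [← nnnormHom_apply, map_multiset_prod]
    refine (Multiset.prod_le_pow_card _ 1 ?_).trans_eq (one_pow _)
    simp only [Multiset.mem_map, nnnormHom_apply]
    rintro _ ⟨s, hs, rfl⟩
    exact hle s (Multiset.mem_of_mem_erase hs)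
  rw [← Multiset.prod_erase hr, norm_mul] at hprod
  nlinarith [(hle r hr).lt_of_ne hne, norm_nonneg (m.erase r).prod, norm_nonneg r,
    NNReal.coe_le_coe.mpr hrest]

namespace Polynomial

theorem reverse_multiset_prod {R : Type*} [CommSemiring R] [NoZeroDivisors R]
    (m : Multiset R[X]) : m.prod.reverse = (m.map reverse).prod := by
  induction m using Multiset.induction_on with
  | empty => simpa using reverse_C (1 : R)
  | cons a t ih =>
    rw [Multiset.prod_cons, Multiset.map_cons, Multiset.prod_cons, reverse_mul_of_domain, ih]

theorem reverse_X_sub_C {K : Type*} [Field K] (r : K) (hr : r ≠ 0) :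
    (X - C r).reverse = C (-r) * (X - C r⁻¹) := by
  have hX : (X : K[X]).reverse = 1 := by
    simpa using (reverse_X_mul (1 : K[X])).trans (reverse_C 1)
  rw [sub_eq_add_neg, ← C_neg, reverse_add_C, natDegree_X, pow_one, mul_sub, ← C_mul, hX]
  simp [hr, sub_eq_add_neg, add_comm]

theorem Splits.reverse_eq_C_coeff_zero_mul {K : Type*} [Field K] {p : K[X]}
    (hs : p.Splits) (hm : p.Monic) (h0 : p.coeff 0 ≠ 0) (hinv : p.roots.map (·⁻¹) = p.roots) :
    p.reverse = C (p.coeff 0) * p := by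
  have hne : ∀ r ∈ p.roots, r ≠ 0 := by
    rintro r hr rfl
    exact h0 (by simpa [coeff_zero_eq_eval_zero] using isRoot_of_mem_roots hr)
  have hprod := hs.eq_prod_roots_of_monic hm
  calc p.reverse = (p.roots.map fun r => C (-r) * (X - C r⁻¹)).prod := by
        conv_lhs => rw [hprod]
        rw [reverse_multiset_prod, Multiset.map_map]
        exact congrArg _ (Multiset.map_congr rfl fun r hr => reverse_X_sub_C r (hne r hr))
    _ = C (p.roots.map (-·)).prod * ((p.roots.map (·⁻¹)).map (X - C ·)).prod := by
        rw [Multiset.prod_map_mul, map_multiset_prod, Multiset.map_map, Multiset.map_map]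
        rfl
    _ = C (p.coeff 0) * p := by
        rw [hinv, ← hprod, Multiset.prod_map_neg, hs.coeff_zero_eq_prod_roots_of_monic hm,
          hs.natDegree_eq_card_roots]

theorem Splits.norm_eq_one_of_mem_roots {K : Type*} [NormedField K] {p : K[X]} (hs : p.Splits)
    (hm : p.Monic) (h0 : ‖p.coeff 0‖ = 1) (hle : ∀ r ∈ p.roots, ‖r‖ ≤ 1) :
    ∀ r ∈ p.roots, ‖r‖ = 1 :=
  Multiset.norm_eq_one_of_norm_prod_eq_one hle <| by
    simpa [hs.coeff_zero_eq_prod_roots_of_monic hm] using h0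

theorem roots_map_inv_eq_of_norm_eq_one {p : ℂ[X]}
    (hreal : p.map (starRingEnd ℂ) = p) (hnorm : ∀ r ∈ p.roots, ‖r‖ = 1) :
    p.roots.map (·⁻¹) = p.roots := by
  rw [Multiset.map_congr rfl fun r hr => Complex.inv_eq_conj (hnorm r hr),
    ← (IsAlgClosed.splits p).roots_map, hreal]

theorem reverse_map_of_injective {R S : Type*} [Semiring R] [Semiring S] {f : R →+* S}
    (hf : Function.Injective f) (p : R[X]) : (p.map f).reverse = p.reverse.map f := by
  ext n
  simp [coeff_reverse, natDegree_map_eq_of_injective hf]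

theorem reverse_eq_C_coeff_zero_mul_of_norm_roots_le_one {p : ℤ[X]} (hm : p.Monic)
    (h0 : IsUnit (p.coeff 0)) (hroots : ∀ z : ℂ, aeval z p = 0 → ‖z‖ ≤ 1) :
    p.reverse = C (p.coeff 0) * p := by
  set q := p.map (Int.castRingHom ℂ)
  have hq0 : ‖q.coeff 0‖ = 1 := by
    rcases Int.isUnit_iff.mp h0 with h | h <;> simp [q, h]
  have hle : ∀ r ∈ q.roots, ‖r‖ ≤ 1 := fun r hr =>
    hroots r (by simpa [q, aeval_def, eval_map] using isRoot_of_mem_roots hr)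
  have hreal : q.map (starRingEnd ℂ) = q := by
    rw [Polynomial.map_map, RingHom.ext_int ((starRingEnd ℂ).comp _) (Int.castRingHom ℂ)]
  have hqrev : q.reverse = C (q.coeff 0) * q :=
    (IsAlgClosed.splits q).reverse_eq_C_coeff_zero_mul (hm.map _)
      (norm_ne_zero_iff.mp (hq0.symm ▸ one_ne_zero))
      (roots_map_inv_eq_of_norm_eq_one hreal
        ((IsAlgClosed.splits q).norm_eq_one_of_mem_roots (hm.map _) hq0 hle))
  apply map_injective _ (RingHom.injective_int (Int.castRingHom ℂ))
  rw [← reverse_map_of_injective (RingHom.injective_int _), hqrev]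
  simp [q]

end Polynomial

namespace NumericalSemigroup

variable (S : NumericalSemigroup)

theorem natCast_mem_intSet {n : ℕ} : (n : ℤ) ∈ S.intSet ↔ n ∈ S.carrier := by
  simp [intSet]

theorem zero_mem_intSet : (0 : ℤ) ∈ S.intSet :=
  ⟨0, S.zero_mem, rfl⟩

theorem notMem_intSet_of_neg {z : ℤ} (hz : z < 0) : z ∉ S.intSet := by
  rintro ⟨n, -, rfl⟩
  exact absurd hz (Int.natCast_nonneg n).not_gt

theorem Frob_notMem_intSet : S.Frob ∉ S.intSet := by
  have hmem := Finset.max'_mem _ (Finset.insert_nonempty (-1 : ℤ)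
    (S.finite_compl.toFinset.image fun n : ℕ => (n : ℤ)))
  rw [← Frob, Finset.mem_insert, Finset.mem_image] at hmem
  rcases hmem with h | ⟨g, hg, h⟩
  · exact S.notMem_intSet_of_neg (by omega)
  · rw [← h, natCast_mem_intSet]
    simpa using hg

theorem neg_one_le_Frob : -1 ≤ S.Frob :=
  Finset.le_max' _ _ (Finset.mem_insert_self _ _)

theorem mem_intSet_of_Frob_lt {z : ℤ} (hz : S.Frob < z) : z ∈ S.intSet := by
  have hle : ∀ y ∈ insert (-1 : ℤ) (S.finite_compl.toFinset.image fun n : ℕ => (n : ℤ)),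
      y ≤ S.Frob := fun y hy => Finset.le_max' _ y hy
  have hz0 : 0 ≤ z := by linarith [hle (-1) (Finset.mem_insert_self _ _)]
  lift z to ℕ using hz0
  rw [natCast_mem_intSet]
  by_contra hgap
  exact absurd (hle z (Finset.mem_insert_of_mem (by simpa using hgap))) (not_le.mpr hz)

theorem coeff_P (i : ℕ) :
    S.P.coeff i = S.intSet.indicator 1 (i : ℤ) - S.intSet.indicator 1 ((i : ℤ) - 1) := by
  have hgaps : ∀ j : ℕ, (∑ s ∈ S.finite_compl.toFinset, (X : ℤ[X]) ^ s).coeff j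
      = 1 - S.intSet.indicator 1 (j : ℤ) := by
    intro j
    by_cases hj : j ∈ S.carrier <;> simp [coeff_X_pow, hj, natCast_mem_intSet]
  cases i with
  | zero =>
    simp [P, hgaps, S.notMem_intSet_of_neg (show (-1 : ℤ) < 0 by norm_num)]
  | succ k =>
    simp [P, sub_mul, coeff_X_mul, coeff_one, hgaps]

theorem coeff_P_zero : S.P.coeff 0 = 1 := by
  rw [coeff_P, Nat.cast_zero, zero_sub,
    Set.indicator_of_mem S.zero_mem_intSet,
    Set.indicator_of_notMem (S.notMem_intSet_of_neg (by norm_num))]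
  norm_num

theorem coeff_P_Frob_add_one : S.P.coeff (S.Frob + 1).toNat = 1 := by
  rw [coeff_P, Int.toNat_of_nonneg (by linarith [S.neg_one_le_Frob]), add_sub_cancel_right,
    Set.indicator_of_mem (S.mem_intSet_of_Frob_lt (lt_add_one _)),
    Set.indicator_of_notMem S.Frob_notMem_intSet]
  norm_num

theorem natDegree_P : S.P.natDegree = (S.Frob + 1).toNat := by
  refine natDegree_eq_of_le_of_coeff_ne_zero ?_ (by simp [coeff_P_Frob_add_one])
  rw [natDegree_le_iff_coeff_eq_zero]
  intro i hi
  rw [coeff_P, Set.indicator_of_mem (S.mem_intSet_of_Frob_lt (by omega)),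
    Set.indicator_of_mem (S.mem_intSet_of_Frob_lt (by omega))]
  simp only [Pi.one_apply, sub_self]

theorem monic_P : S.P.Monic := by
  rw [Monic, leadingCoeff, natDegree_P, coeff_P_Frob_add_one]

theorem indicator_succ_sub_indicator_of_reverse_P_eq (hP : S.P.reverse = S.P) (z : ℤ) :
    S.intSet.indicator (1 : ℤ → ℤ) (z + 1) - S.intSet.indicator 1 z
      = S.intSet.indicator 1 (S.Frob - z) - S.intSet.indicator 1 (S.Frob - (z + 1)) := by
  have hF := S.neg_one_le_Frob
  rcases lt_or_ge (z + 1) 0 with hz | hz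
  · rw [Set.indicator_of_notMem (S.notMem_intSet_of_neg hz),
      Set.indicator_of_notMem (S.notMem_intSet_of_neg (by omega)),
      Set.indicator_of_mem (S.mem_intSet_of_Frob_lt (by omega)),
      Set.indicator_of_mem (S.mem_intSet_of_Frob_lt (by omega))]
    simp only [Pi.one_apply, sub_self]
  rcases lt_or_ge S.Frob z with hz' | hz'
  · rw [Set.indicator_of_mem (S.mem_intSet_of_Frob_lt (by omega)),
      Set.indicator_of_mem (S.mem_intSet_of_Frob_lt hz'),
      Set.indicator_of_notMem (S.notMem_intSet_of_neg (by omega)),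
      Set.indicator_of_notMem (S.notMem_intSet_of_neg (by omega))]
    simp only [Pi.one_apply, sub_self]
  lift z + 1 to ℕ using hz with i hi
  have hin : i ≤ S.P.natDegree := by rw [natDegree_P]; omega
  have hcoeff : S.P.coeff i = S.P.coeff (S.P.natDegree - i) := by
    conv_lhs => rw [← hP, coeff_reverse, revAt_le hin]
  rw [coeff_P, coeff_P, natDegree_P, Nat.cast_sub (by omega), Int.toNat_of_nonneg (by omega)]
    at hcoeff
  convert hcoeff using 3 <;> omega

theorem isSymmetric_of_reverse_P_eq (hP : S.P.reverse = S.P) : S.IsSymmetric := by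
  have hstep := S.indicator_succ_sub_indicator_of_reverse_P_eq hP
  have hsum : ∀ z : ℤ,
      S.intSet.indicator (1 : ℤ → ℤ) z + S.intSet.indicator 1 (S.Frob - z) = 1 := by
    intro z
    induction z using Int.induction_on with
    | zero =>
      rw [sub_zero, Set.indicator_of_mem S.zero_mem_intSet,
        Set.indicator_of_notMem S.Frob_notMem_intSet]
      simp
    | succ k ih => linarith [hstep k]
    | pred k ih => linarith [sub_add_cancel (-(k : ℤ)) 1 ▸ hstep (-k - 1)]
  intro z
  have := hsum z
  by_cases hz : z ∈ S.intSet <;> by_cases hFz : S.Frob - z ∈ S.intSet <;>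
    simp_all [Set.indicator]

end NumericalSemigroup

open NumericalSemigroup in
/-- If `S` is a cyclotomic numerical semigroup, then `S` is symmetric. -/
theorem cyclotomic_implies_symmetric (S : NumericalSemigroup) (h : S.IsCyclotomicNS) :
    S.IsSymmetric := by
  have hrev := reverse_eq_C_coeff_zero_mul_of_norm_roots_le_one S.monic_P
    (by rw [S.coeff_P_zero]; exact isUnit_one) h
  rw [S.coeff_P_zero, C_1, one_mul] at hrev
  exact S.isSymmetric_of_reverse_P_eq hrev
end

section
/- Let S = a_1 S_1 +_{a_1 a_2} a_2 S_2 be a gluing of numerical semigroups S_1 and S_2. Then (1−x^{a_1})(1−x^{a_2})·P_S(x) = (1−x)(1−x^{a_1 a_2})·P_{S_1}(x^{a_1})·P_{S_2}(x^{a_2}) as polynomials. -/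
open Polynomial
open scoped Classical

/-!
Over power series, `P_T(x) = (1 - x) H_T(x)` with `H_T(x) = ∑_{t ∈ T} x^t`, so the identity reduces
to `H_S(x) = (1 - x^{a₁a₂}) H_{S₁}(x^{a₁}) H_{S₂}(x^{a₂})`. Since `a₂ ∈ S₁`, the series
`(1 - x^{a₂}) H_{S₁}(x)` is the generating function of the Apéry set `Ap(S₁, a₂)`, and every element
of `S` is uniquely `a₁ w + a₂ s₂` with `w ∈ Ap(S₁, a₂)` and `s₂ ∈ S₂`: existence by moving multiples
of `a₂` from `s₁` to `s₂` (as `a₁ ∈ S₂`), uniqueness because distinct elements of `Ap(S₁, a₂)` are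
incongruent modulo `a₂` and `a₁` is invertible modulo `a₂`.
-/

open scoped Pointwise

namespace PowerSeries

variable {R : Type*}

theorem mk_sub [Ring R] (f g : ℕ → R) : mk (f - g) = mk f - mk g := by
  ext n
  simp

theorem X_pow_mul_mk_indicator [Semiring R] (m : ℕ) (A : Set ℕ) :
    (X ^ m * mk (A.indicator 1) : R⟦X⟧) = mk (((· + m) '' A).indicator 1) := by
  ext n
  have hmem : n ∈ (· + m) '' A ↔ m ≤ n ∧ n - m ∈ A := by
    constructor
    · rintro ⟨a, ha, rfl⟩
      simpa using ha
    · rintro ⟨hle, hA⟩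
      exact ⟨n - m, hA, Nat.sub_add_cancel hle⟩
  rw [coeff_X_pow_mul', coeff_mk, coeff_mk]
  by_cases h : m ≤ n <;> simp [Set.indicator_apply, hmem, h]

theorem expand_mk_indicator [CommRing R] (a : ℕ) (ha : a ≠ 0) (A : Set ℕ) :
    expand a ha (mk (A.indicator 1) : R⟦X⟧) = mk (((a * ·) '' A).indicator 1) := by
  ext n
  rw [coeff_expand, coeff_mk, coeff_mk]
  by_cases h : a ∣ n
  · obtain ⟨k, rfl⟩ := h
    simp [Set.indicator_apply, Nat.mul_div_cancel_left _ (Nat.pos_of_ne_zero ha),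
      (mul_right_injective₀ ha).mem_set_image]
  · have : n ∉ (a * ·) '' A := by rintro ⟨k, -, rfl⟩; exact h (dvd_mul_right a k)
    simp [h, this]

theorem mk_indicator_mul_mk_indicator [Semiring R] {A B : Set ℕ}
    (h : (A ×ˢ B).InjOn fun p => p.1 + p.2) :
    (mk (A.indicator 1) * mk (B.indicator 1) : R⟦X⟧) = mk ((A + B).indicator 1) := by
  ext n
  have hterm : ∀ p : ℕ × ℕ, A.indicator (1 : ℕ → R) p.1 * B.indicator 1 p.2
      = (A ×ˢ B).indicator 1 p := by
    rintro ⟨i, j⟩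
    by_cases hi : i ∈ A <;> by_cases hj : j ∈ B <;> simp [hi, hj]
  simp only [coeff_mul, coeff_mk, hterm]
  by_cases hn : n ∈ A + B
  · obtain ⟨i, hi, j, hj, rfl⟩ := hn
    rw [Set.indicator_of_mem (Set.add_mem_add hi hj),
      Finset.sum_eq_single_of_mem (i, j) (Finset.HasAntidiagonal.mem_antidiagonal.mpr rfl)]
    · simp [hi, hj]
    · intro p hp hne
      refine Set.indicator_of_notMem (fun hpAB => hne ?_) _
      exact h hpAB (Set.mk_mem_prod hi hj) (Finset.HasAntidiagonal.mem_antidiagonal.mp hp)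
  · rw [Set.indicator_of_notMem hn]
    refine Finset.sum_eq_zero fun p hp => Set.indicator_of_notMem (fun hpAB => hn ?_) _
    rw [← Finset.HasAntidiagonal.mem_antidiagonal.mp hp]
    exact Set.add_mem_add hpAB.1 hpAB.2

end PowerSeries

namespace Polynomial

variable {R : Type*} [CommRing R]

theorem coe_expand_eq_expand_coe (a : ℕ) (ha : a ≠ 0) (p : R[X]) :
    (expand R a p : PowerSeries R) = PowerSeries.expand a ha (p : PowerSeries R) := by
  ext n
  rw [coeff_coe, coeff_expand (Nat.pos_of_ne_zero ha), PowerSeries.coeff_expand]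
  simp [coeff_coe]

theorem coe_sum_X_pow (F : Finset ℕ) :
    ((∑ s ∈ F, X ^ s : R[X]) : PowerSeries R) = PowerSeries.mk ((F : Set ℕ).indicator 1) := by
  ext n
  simp [coeff_coe, finsetSum_coeff, coeff_X_pow, Set.indicator_apply]

end Polynomial

namespace NumericalSemigroup

variable (S : NumericalSemigroup) {m : ℕ}

theorem H_eq_mk_indicator : S.H = PowerSeries.mk (S.carrier.indicator 1) := by
  ext n
  simp [H, Set.indicator_apply]

theorem coe_P : (S.P : PowerSeries ℤ) = (1 - PowerSeries.X) * S.H := by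
  have hH : S.H =
      PowerSeries.mk 1 - PowerSeries.mk ((S.finite_compl.toFinset : Set ℕ).indicator 1) := by
    rw [H_eq_mk_indicator, Set.Finite.coe_toFinset, Set.indicator_compl, ← PowerSeries.mk_sub,
      sub_sub_cancel]
  rw [hH, mul_sub, mul_comm, PowerSeries.mk_one_mul_one_sub_eq_one, P, ← Polynomial.coe_sum_X_pow]
  push_cast
  ring

theorem coe_expand_P (a : ℕ) (ha : a ≠ 0) :
    (Polynomial.expand ℤ a S.P : PowerSeries ℤ) =
      (1 - PowerSeries.X ^ a) * PowerSeries.expand a ha S.H := by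
  rw [Polynomial.coe_expand_eq_expand_coe a ha, coe_P, map_mul, map_sub, map_one,
    PowerSeries.expand_X]

theorem mul_mem (hm : m ∈ S.carrier) (k : ℕ) : k * m ∈ S.carrier := by
  induction k with
  | zero => simpa using S.zero_mem
  | succ k ih => simpa [add_mul] using S.add_mem ih hm

theorem Ap_eq_diff : S.Ap m = S.carrier \ (· + m) '' S.carrier := by
  ext s
  simp [Ap]

theorem one_sub_X_pow_mul_H (hm : m ∈ S.carrier) :
    (1 - PowerSeries.X ^ m) * S.H = PowerSeries.mk ((S.Ap m).indicator 1) := by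
  have hsub : (· + m) '' S.carrier ⊆ S.carrier := by
    rintro _ ⟨s, hs, rfl⟩
    exact S.add_mem hs hm
  rw [H_eq_mk_indicator, sub_mul, one_mul, PowerSeries.X_pow_mul_mk_indicator, Ap_eq_diff,
    Set.indicator_sdiff hsub, PowerSeries.mk_sub]

theorem exists_mem_Ap_add_mul (hm : 0 < m) {s : ℕ} (hs : s ∈ S.carrier) :
    ∃ u ∈ S.Ap m, ∃ k, s = u + k * m := by
  induction s using Nat.strong_induction_on with
  | _ s ih =>
    by_cases hAp : s ∈ S.Ap m
    · exact ⟨s, hAp, 0, by simp⟩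
    · obtain ⟨t, ht, rfl⟩ : ∃ t ∈ S.carrier, t + m = s := by simpa [Ap, hs] using hAp
      obtain ⟨u, hu, k, rfl⟩ := ih t (by omega) ht
      exact ⟨u, hu, k + 1, by ring⟩

theorem eq_of_mem_Ap_of_modEq (hm : m ∈ S.carrier) {u u' : ℕ} (hu : u ∈ S.Ap m)
    (hu' : u' ∈ S.Ap m) (h : u ≡ u' [MOD m]) : u = u' := by
  wlog hle : u ≤ u' generalizing u u'
  · exact (this hu' hu h.symm (by omega)).symm
  obtain ⟨k, hk⟩ := (Nat.modEq_iff_dvd' hle).mp h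
  rcases k with _ | k
  · omega
  · exfalso
    refine hu'.2 (u + k * m) (S.add_mem hu.1 (S.mul_mem hm k)) ?_
    lia

section Gluing

variable {S₁ S₂ S : NumericalSemigroup} {a₁ a₂ : ℕ}

theorem carrier_eq_image_Ap_add_image (ha₂ : 0 < a₂) (h₁ : a₁ ∈ S₂.carrier)
    (hS : S.carrier = {n | ∃ s₁ ∈ S₁.carrier, ∃ s₂ ∈ S₂.carrier, n = a₁ * s₁ + a₂ * s₂}) :
    S.carrier = (a₁ * ·) '' S₁.Ap a₂ + (a₂ * ·) '' S₂.carrier := by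
  rw [hS]
  ext n
  constructor
  · rintro ⟨s₁, hs₁, s₂, hs₂, rfl⟩
    obtain ⟨u, hu, k, rfl⟩ := S₁.exists_mem_Ap_add_mul ha₂ hs₁
    exact ⟨a₁ * u, ⟨u, hu, rfl⟩, a₂ * (s₂ + k * a₁), ⟨_, S₂.add_mem hs₂ (S₂.mul_mem h₁ k), rfl⟩,
      by ring⟩
  · rintro ⟨_, ⟨u, hu, rfl⟩, _, ⟨v, hv, rfl⟩, rfl⟩
    exact ⟨u, hu.1, v, hv, rfl⟩

theorem injOn_add_image_Ap_prod_image (ha₂ : 0 < a₂) (hcop : a₁.Coprime a₂)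
    (h₂ : a₂ ∈ S₁.carrier) (B : Set ℕ) :
    (((a₁ * ·) '' S₁.Ap a₂) ×ˢ ((a₂ * ·) '' B)).InjOn fun p => p.1 + p.2 := by
  rintro ⟨_, _⟩ ⟨⟨u, hu, rfl⟩, ⟨v, -, rfl⟩⟩ ⟨_, _⟩ ⟨⟨u', hu', rfl⟩, ⟨v', -, rfl⟩⟩ h
  have hmod : a₁ * u ≡ a₁ * u' [MOD a₂] := by
    simpa only [Nat.ModEq, Nat.add_mul_mod_self_left] using congrArg (· % a₂) h
  obtain rfl := S₁.eq_of_mem_Ap_of_modEq h₂ hu hu' (hmod.cancel_left_of_coprime hcop.symm)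
  obtain rfl : v = v' := Nat.eq_of_mul_eq_mul_left ha₂ (Nat.add_left_cancel h)
  rfl

theorem H_eq_of_gluing (ha₁ : 0 < a₁) (ha₂ : 0 < a₂) (hcop : a₁.Coprime a₂)
    (h₁ : a₁ ∈ S₂.carrier) (h₂ : a₂ ∈ S₁.carrier)
    (hS : S.carrier = {n | ∃ s₁ ∈ S₁.carrier, ∃ s₂ ∈ S₂.carrier, n = a₁ * s₁ + a₂ * s₂}) :
    S.H = (1 - PowerSeries.X ^ (a₁ * a₂)) * PowerSeries.expand a₁ ha₁.ne' S₁.H *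
      PowerSeries.expand a₂ ha₂.ne' S₂.H := by
  have hAp : (1 - PowerSeries.X ^ (a₁ * a₂)) * PowerSeries.expand a₁ ha₁.ne' S₁.H
      = PowerSeries.mk (((a₁ * ·) '' S₁.Ap a₂).indicator 1) := by
    rw [pow_mul, ← PowerSeries.expand_X a₁ ha₁.ne', ← map_pow,
      ← map_one (PowerSeries.expand a₁ ha₁.ne'), ← map_sub, ← map_mul,
      one_sub_X_pow_mul_H _ h₂, PowerSeries.expand_mk_indicator]
  rw [hAp, H_eq_mk_indicator S₂, H_eq_mk_indicator S, PowerSeries.expand_mk_indicator,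
    PowerSeries.mk_indicator_mul_mk_indicator (injOn_add_image_Ap_prod_image ha₂ hcop h₂ _),
    carrier_eq_image_Ap_add_image ha₂ h₁ hS]

end Gluing

end NumericalSemigroup

open NumericalSemigroup in
/-- For a gluing `S = a₁S₁ +_{a₁a₂} a₂S₂` of numerical semigroups:
`(1-x^{a₁})(1-x^{a₂})·P_S(x) = (1-x)(1-x^{a₁a₂})·P_{S₁}(x^{a₁})·P_{S₂}(x^{a₂})`. -/
theorem semigroupPolynomial_gluing (S₁ S₂ S : NumericalSemigroup) (a₁ a₂ : ℕ)
    (ha₁ : 0 < a₁) (ha₂ : 0 < a₂) (hcop : Nat.Coprime a₁ a₂)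
    (h₁ : a₁ ∈ S₂.carrier) (h₂ : a₂ ∈ S₁.carrier)
    (hS : S.carrier = {n | ∃ s₁ ∈ S₁.carrier, ∃ s₂ ∈ S₂.carrier, n = a₁ * s₁ + a₂ * s₂}) :
    (1 - (X : Polynomial ℤ) ^ a₁) * (1 - (X : Polynomial ℤ) ^ a₂) * S.P
      = (1 - X) * (1 - X ^ (a₁ * a₂)) *
        (Polynomial.expand ℤ a₁ S₁.P) * (Polynomial.expand ℤ a₂ S₂.P) := by
  rw [← Polynomial.coe_inj]
  push_cast
  rw [coe_P, coe_expand_P _ _ ha₁.ne', coe_expand_P _ _ ha₂.ne',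
    H_eq_of_gluing ha₁ ha₂ hcop h₁ h₂ hS]
  ring
end

section
/- Let n ≥ 2 and let (a_1, ..., a_n) be a smooth sequence of relatively prime positive integers, and let S = ⟨a_1, ..., a_n⟩. Then the Frobenius number of S satisfies F(S) = Σ_{i=2}^n c_i a_i − Σ_{i=1}^n a_i, where c_i = gcd(a_1,...,a_{i−1}) / gcd(a_1,...,a_i). -/
open Polynomial
open scoped Classical

/-- `d_k = gcd(a_1, …, a_k)`. -/
def dseq (a : ℕ → ℕ) (k : ℕ) : ℕ := (Finset.Icc 1 k).gcd a

/-- `c_k = d_{k-1} / d_k`. -/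
def cseq (a : ℕ → ℕ) (k : ℕ) : ℕ := dseq a (k - 1) / dseq a k

/-- The numerical semigroup (as a set) generated by `a_1, …, a_k`. -/
def gen (a : ℕ → ℕ) (k : ℕ) : Set ℕ := ↑(AddSubmonoid.closure (a '' Set.Icc 1 k))

/-- The sequence `(a_1, …, a_n)` is smooth if `c_k·a_k ∈ ⟨a_1, …, a_{k-1}⟩` for
every `k = 2, …, n`. -/
def SmoothSeq (a : ℕ → ℕ) (n : ℕ) : Prop :=
  ∀ k, 2 ≤ k → k ≤ n → cseq a k * a k ∈ gen a (k - 1)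

/-! Let `d = gcd(a_1, …, a_n)` and `e = a_{n+1}`. Then `⟨a_1, …, a_{n+1}⟩ = d M + ⟨e⟩` with
`M = ⟨a_1/d, …, a_n/d⟩` and `gcd(e, d) = 1`, and smoothness at `n + 1` says exactly that `e ∈ M`.
For such a gluing `F(d M + ⟨e⟩) = d F(M) + (d - 1) e`. Since `(a_i / d)_{i ≤ n}` is again smooth
with the same `c_i`, induction on `n` gives the formula. -/

structure IsFrobeniusNumber (G : Set ℕ) (F : ℤ) : Prop where
  neg_one_le : -1 ≤ F
  mem_of_lt : ∀ m : ℕ, F < m → m ∈ G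
  notMem : ∀ m : ℕ, (m : ℤ) = F → m ∉ G

theorem isFrobeniusNumber_univ : IsFrobeniusNumber Set.univ (-1) :=
  ⟨le_rfl, fun _ _ => trivial, fun m hm => by omega⟩

theorem NumericalSemigroup.frob_eq_of_isFrobeniusNumber {S : NumericalSemigroup} {F : ℤ}
    (h : IsFrobeniusNumber S.carrier F) : S.Frob = F := by
  refine le_antisymm (Finset.max'_le _ _ _ ?_) (Finset.le_max' _ _ ?_)
  · simp only [Finset.mem_insert, Finset.mem_image, Set.Finite.mem_toFinset, Set.mem_compl_iff]
    rintro _ (rfl | ⟨m, hm, rfl⟩)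
    · exact h.neg_one_le
    · exact not_lt.1 fun hlt => hm (h.mem_of_lt m hlt)
  · obtain rfl | hF := h.neg_one_le.eq_or_lt
    · exact Finset.mem_insert_self _ _
    · lift F to ℕ using by omega
      exact Finset.mem_insert_of_mem (Finset.mem_image_of_mem _
        ((Set.Finite.mem_toFinset _).2 (h.notMem F rfl)))

theorem AddSubmonoid.mem_map_mulLeft_sup_closure_singleton {M : AddSubmonoid ℕ} {d e m : ℕ} :
    m ∈ M.map (AddMonoidHom.mulLeft d) ⊔ AddSubmonoid.closure {e} ↔
      ∃ s ∈ M, ∃ k : ℕ, d * s + k * e = m := by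
  simp [AddSubmonoid.mem_sup, AddSubmonoid.mem_closure_singleton]

theorem IsFrobeniusNumber.glue {M : AddSubmonoid ℕ} {F : ℤ} (hF : IsFrobeniusNumber M F)
    {d e : ℕ} (hd : 0 < d) (he : e ∈ M) (hcop : e.Coprime d) :
    IsFrobeniusNumber ↑(M.map (AddMonoidHom.mulLeft d) ⊔ AddSubmonoid.closure {e})
      (d * F + (d - 1) * e) := by
  have hF1 := hF.neg_one_le
  refine ⟨?_, fun m hm => ?_, fun m hm => ?_⟩
  · rcases e.eq_zero_or_pos with rfl | he0
    · obtain rfl : d = 1 := Nat.coprime_zero_left d |>.1 hcop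
      simpa using hF1
    · nlinarith
  · -- choose `j < d` with `j e ≡ m [MOD d]`; then `m - j e = d x` with `x > F`
    obtain ⟨j, hjd, hj⟩ := Nat.exists_mul_mod_eq_of_coprime m hcop hd.ne'
    obtain ⟨x, hx⟩ := Nat.modEq_iff_dvd.1 hj
    push_cast at hx
    have hxF : F < x := by
      have : (j : ℤ) * e ≤ (d - 1) * e := by gcongr; omega
      nlinarith
    lift x to ℕ using by omega
    rw [SetLike.mem_coe, AddSubmonoid.mem_map_mulLeft_sup_closure_singleton]
    exact ⟨x, hF.mem_of_lt x hxF, j, by linarith⟩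
  · -- `d F + (d - 1) e = d s + k e` forces `d ∣ k + 1`, and then `F = s + ((k + 1) / d - 1) e ∈ M`
    rw [SetLike.mem_coe, AddSubmonoid.mem_map_mulLeft_sup_closure_singleton]
    rintro ⟨s, hs, k, rfl⟩
    push_cast at hm
    have hdvd : d ∣ (k + 1) * e := by
      refine Int.natCast_dvd_natCast.1 ⟨F + e - s, ?_⟩
      push_cast
      linear_combination hm
    obtain ⟨_ | r, ht⟩ := (Nat.Coprime.symm hcop).dvd_of_dvd_mul_right hdvd
    · simp at ht
    have hFsr : ((s + r * e : ℕ) : ℤ) = F := by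
      have ht' : (k : ℤ) + 1 = d * (r + 1) := by exact_mod_cast ht
      refine mul_left_cancel₀ (by positivity : (d : ℤ) ≠ 0) ?_
      push_cast
      linear_combination hm - e * ht'
    exact hF.notMem _ hFsr (M.add_mem hs (smul_eq_mul r e ▸ M.nsmul_mem he r))

theorem dseq_zero (a : ℕ → ℕ) : dseq a 0 = 0 := by simp [dseq]

theorem dseq_one (a : ℕ → ℕ) : dseq a 1 = a 1 := by simp [dseq]

theorem dseq_add_one (a : ℕ → ℕ) (k : ℕ) : dseq a (k + 1) = (a (k + 1)).gcd (dseq a k) := by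
  rw [dseq, ← Finset.insert_Icc_right_eq_Icc_add_one (by omega), Finset.gcd_insert]
  rfl

theorem dseq_dvd {a : ℕ → ℕ} {i k : ℕ} (h1 : 1 ≤ i) (h2 : i ≤ k) : dseq a k ∣ a i :=
  Finset.gcd_dvd (Finset.mem_Icc.2 ⟨h1, h2⟩)

theorem dseq_pos {a : ℕ → ℕ} {k : ℕ} (ha1 : 0 < a 1) (hk : 1 ≤ k) : 0 < dseq a k :=
  Nat.pos_of_dvd_of_pos (dseq_dvd le_rfl hk) ha1

theorem one_le_of_dseq_eq_one {a : ℕ → ℕ} {n : ℕ} (h : dseq a n = 1) : 1 ≤ n := by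
  rcases n with _ | n
  · simp [dseq_zero] at h
  · omega

theorem cseq_add_one_of_dseq_eq_one {a : ℕ → ℕ} {n : ℕ} (h : dseq a (n + 1) = 1) :
    cseq a (n + 1) = dseq a n := by
  simp [cseq, h]

theorem dseq_eq_mul_of_eq_mul {a b : ℕ → ℕ} {d k : ℕ}
    (hab : ∀ i, 1 ≤ i → i ≤ k → a i = d * b i) : dseq a k = d * dseq b k := by
  rw [dseq, dseq, ← normalize_eq d, ← Finset.gcd_mul_left]
  exact Finset.gcd_congr rfl fun i hi => hab i (Finset.mem_Icc.1 hi).1 (Finset.mem_Icc.1 hi).2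

theorem cseq_eq_of_eq_mul {a b : ℕ → ℕ} {d k : ℕ}
    (hab : ∀ i, 1 ≤ i → i ≤ k → a i = d * b i) (hd : 0 < d) : cseq a k = cseq b k := by
  rw [cseq, cseq, dseq_eq_mul_of_eq_mul hab,
    dseq_eq_mul_of_eq_mul (k := k - 1) fun i h1 h2 => hab i h1 (by omega),
    Nat.mul_div_mul_left _ _ hd]

theorem closure_image_Icc_add_one (a : ℕ → ℕ) (k : ℕ) :
    AddSubmonoid.closure (a '' Set.Icc 1 (k + 1)) =
      AddSubmonoid.closure (a '' Set.Icc 1 k) ⊔ AddSubmonoid.closure {a (k + 1)} := by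
  rw [← Set.insert_Icc_right_eq_Icc_add_one (by omega), Set.image_insert_eq, Set.insert_eq,
    AddSubmonoid.closure_union, sup_comm]

theorem closure_image_Icc_eq_map {a b : ℕ → ℕ} {d k : ℕ}
    (hab : ∀ i, 1 ≤ i → i ≤ k → a i = d * b i) :
    AddSubmonoid.closure (a '' Set.Icc 1 k) =
      (AddSubmonoid.closure (b '' Set.Icc 1 k)).map (AddMonoidHom.mulLeft d) := by
  rw [AddMonoidHom.map_mclosure, Set.image_image]
  exact congrArg _ (Set.image_congr fun i hi => hab i hi.1 hi.2)

theorem gen_one_of_eq_one {a : ℕ → ℕ} (h : a 1 = 1) : gen a 1 = Set.univ := by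
  rw [gen, Set.Icc_self, Set.image_singleton, h, Nat.addSubmonoidClosure_one,
    AddSubmonoid.coe_top]

theorem mul_mem_gen_iff_of_eq_mul {a b : ℕ → ℕ} {d k : ℕ}
    (hab : ∀ i, 1 ≤ i → i ≤ k → a i = d * b i) (hd : 0 < d) {x : ℕ} :
    d * x ∈ gen a k ↔ x ∈ gen b k := by
  rw [gen, closure_image_Icc_eq_map hab, SetLike.mem_coe]
  exact AddSubmonoid.mem_map_iff_mem (f := AddMonoidHom.mulLeft d) (mul_right_injective₀ hd.ne')

theorem SmoothSeq.mono {a : ℕ → ℕ} {m n : ℕ} (h : SmoothSeq a n) (hmn : m ≤ n) :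
    SmoothSeq a m :=
  fun k h2 hk => h k h2 (hk.trans hmn)

theorem SmoothSeq.of_eq_mul {a b : ℕ → ℕ} {d k : ℕ} (h : SmoothSeq a k)
    (hab : ∀ i, 1 ≤ i → i ≤ k → a i = d * b i) (hd : 0 < d) : SmoothSeq b k := by
  intro j hj2 hjk
  have := h j hj2 hjk
  rwa [cseq_eq_of_eq_mul (fun i h1 h2 => hab i h1 (h2.trans hjk)) hd, hab j (by omega) hjk,
    mul_left_comm, mul_mem_gen_iff_of_eq_mul (fun i h1 h2 => hab i h1 (by omega)) hd] at this

def frobeniusFormula (a : ℕ → ℕ) (n : ℕ) : ℤ :=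
  (∑ i ∈ Finset.Icc 2 n, (cseq a i * a i : ℤ)) - ∑ i ∈ Finset.Icc 1 n, (a i : ℤ)

theorem frobeniusFormula_one (a : ℕ → ℕ) : frobeniusFormula a 1 = -a 1 := by
  simp [frobeniusFormula]

theorem frobeniusFormula_add_one {a b : ℕ → ℕ} {d n : ℕ} (hn : 1 ≤ n)
    (hab : ∀ i, 1 ≤ i → i ≤ n → a i = d * b i) (hd : 0 < d) (hc : cseq a (n + 1) = d) :
    frobeniusFormula a (n + 1) = d * frobeniusFormula b n + (d - 1) * a (n + 1) := by
  have hc_sum : ∑ i ∈ Finset.Icc 2 n, (cseq a i * a i : ℤ) =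
      d * ∑ i ∈ Finset.Icc 2 n, (cseq b i * b i : ℤ) := by
    rw [Finset.mul_sum]
    refine Finset.sum_congr rfl fun i hi => ?_
    rw [Finset.mem_Icc] at hi
    rw [cseq_eq_of_eq_mul (fun j h1 h2 => hab j h1 (h2.trans hi.2)) hd, hab i (by omega) hi.2]
    push_cast
    ring
  have ha_sum : ∑ i ∈ Finset.Icc 1 n, (a i : ℤ) = d * ∑ i ∈ Finset.Icc 1 n, (b i : ℤ) := by
    rw [Finset.mul_sum]
    refine Finset.sum_congr rfl fun i hi => ?_
    rw [hab i (Finset.mem_Icc.1 hi).1 (Finset.mem_Icc.1 hi).2]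
    push_cast
    ring
  rw [frobeniusFormula, frobeniusFormula, Finset.sum_Icc_succ_top (by omega),
    Finset.sum_Icc_succ_top (by omega), hc_sum, ha_sum, hc]
  ring

theorem isFrobeniusNumber_gen {n : ℕ} {a : ℕ → ℕ} (ha1 : 0 < a 1) (hgcd : dseq a n = 1)
    (hsmooth : SmoothSeq a n) : IsFrobeniusNumber (gen a n) (frobeniusFormula a n) := by
  induction n, one_le_of_dseq_eq_one hgcd using Nat.le_induction generalizing a with
  | base =>
    rw [dseq_one] at hgcd
    rw [gen_one_of_eq_one hgcd, frobeniusFormula_one, hgcd]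
    exact isFrobeniusNumber_univ
  | succ n hn ih =>
    set d := dseq a n
    have hd : 0 < d := dseq_pos ha1 hn
    set b := fun i => a i / d
    have hab : ∀ i, 1 ≤ i → i ≤ n → a i = d * b i := fun i h1 h2 =>
      (Nat.mul_div_cancel' (dseq_dvd h1 h2)).symm
    have hb1 : 0 < b 1 := Nat.pos_of_mul_pos_left (hab 1 le_rfl hn ▸ ha1)
    have hbgcd : dseq b n = 1 :=
      Nat.eq_of_mul_eq_mul_left hd (by rw [← dseq_eq_mul_of_eq_mul hab, mul_one])
    have hcop : (a (n + 1)).Coprime d := by rwa [dseq_add_one] at hgcd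
    have hc : cseq a (n + 1) = d := cseq_add_one_of_dseq_eq_one hgcd
    have he : a (n + 1) ∈ gen b n :=
      (mul_mem_gen_iff_of_eq_mul hab hd).1 (hc ▸ hsmooth (n + 1) (by omega) le_rfl)
    have IH := ih hb1 hbgcd ((hsmooth.mono n.le_succ).of_eq_mul hab hd)
    rw [gen, closure_image_Icc_add_one, closure_image_Icc_eq_map hab,
      frobeniusFormula_add_one hn hab hd hc]
    exact IH.glue hd he hcop

open NumericalSemigroup in
theorem frobenius_smooth_general (n : ℕ) (a : ℕ → ℕ)
    (hpos : ∀ i, 1 ≤ i → i ≤ n → 0 < a i) (hgcd : dseq a n = 1) (hsmooth : SmoothSeq a n)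
    (S : NumericalSemigroup) (hS : S.carrier = gen a n) :
    S.Frob = (∑ i ∈ Finset.Icc 2 n, (cseq a i * a i : ℤ)) - ∑ i ∈ Finset.Icc 1 n, (a i : ℤ) := by
  have ha1 := hpos 1 le_rfl (one_le_of_dseq_eq_one hgcd)
  exact S.frob_eq_of_isFrobeniusNumber (hS ▸ isFrobeniusNumber_gen ha1 hgcd hsmooth)

open NumericalSemigroup in
/-- For a smooth sequence `(a_1, …, a_n)` of relatively prime positive integers and
`S = ⟨a_1, …, a_n⟩`: `F(S) = Σ_{i=2}^n c_i a_i − Σ_{i=1}^n a_i`. -/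
theorem frobenius_smooth (n : ℕ) (hn : 2 ≤ n) (a : ℕ → ℕ)
    (hpos : ∀ i, 1 ≤ i → i ≤ n → 0 < a i) (hgcd : dseq a n = 1) (hsmooth : SmoothSeq a n)
    (S : NumericalSemigroup) (hS : S.carrier = gen a n) :
    S.Frob = (∑ i ∈ Finset.Icc 2 n, (cseq a i * a i : ℤ)) - ∑ i ∈ Finset.Icc 1 n, (a i : ℤ) :=
  frobenius_smooth_general n a hpos hgcd hsmooth S hS
end
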